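/- arXiv:1503.07350 — 7 statements merged into one kernel-verified Lean document; each statement's English description precedes it below -/
import Mathlib

section
/- Let T ∈ B(X) and S ∈ B(Y) be bounded operators on Banach spaces that are equivalent after extension. Then T has closed range if and only if S has closed range. -/
open ContinuousLinearMap

lemma range_prodMap_id_closed_iff
    {X Y : Type*} [NormedAddCommGroup X] [NormedSpace ℂ X]
    [NormedAddCommGroup Y] [NormedSpace ℂ Y]
    (T : X →L[ℂ] X) :
    IsClosed (Set.range (T.prodMap (ContinuousLinearMap.id ℂ Y))) ↔
      IsClosed (Set.range T) := by
  have h1 : Set.range (T.prodMap (ContinuousLinearMap.id ℂ Y))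
      = Prod.fst ⁻¹' Set.range T := by
    ext ⟨x, y⟩
    constructor
    · rintro ⟨a, ha⟩
      exact ⟨a.1, congrArg Prod.fst ha⟩
    · rintro ⟨a, ha⟩
      exact ⟨(a, y), by simp [ContinuousLinearMap.coe_prodMap', Prod.map, ha]⟩
  constructor
  · intro h
    have h2 : Set.range T = (fun x : X => (x, (0 : Y))) ⁻¹'
        Set.range (T.prodMap (ContinuousLinearMap.id ℂ Y)) := by
      rw [h1]; ext x; simp [Set.mem_preimage]
    rw [h2]
    exact h.preimage (continuous_id.prodMk continuous_const)
  · intro h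
    rw [h1]
    exact h.preimage continuous_fst

/-- If `T` and `S` are equivalent after extension, then `T` has closed range
iff `S` has closed range. -/
theorem closed_range_iff_of_equivalent_after_extension
    (X Y : Type*) [NormedAddCommGroup X] [NormedSpace ℂ X] [CompleteSpace X]
    [NormedAddCommGroup Y] [NormedSpace ℂ Y] [CompleteSpace Y]
    (T : X →L[ℂ] X) (S : Y →L[ℂ] Y)
    (hEAE : ∃ (E : (Y × X) ≃L[ℂ] (X × Y)) (F : (X × Y) ≃L[ℂ] (Y × X)),
      T.prodMap (ContinuousLinearMap.id ℂ Y) =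
        (E : (Y × X) →L[ℂ] (X × Y)) ∘L
          (S.prodMap (ContinuousLinearMap.id ℂ X)) ∘L
            (F : (X × Y) →L[ℂ] (Y × X))) :
    IsClosed (Set.range T) ↔ IsClosed (Set.range S) := by
  obtain ⟨E, F, hEF⟩ := hEAE
  rw [← range_prodMap_id_closed_iff (Y := Y) T,
      ← range_prodMap_id_closed_iff (Y := X) S, hEF]
  have hr : Set.range ((E : (Y × X) →L[ℂ] (X × Y)) ∘L
      (S.prodMap (ContinuousLinearMap.id ℂ X)) ∘L (F : (X × Y) →L[ℂ] (Y × X)))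
      = ⇑E '' Set.range (S.prodMap (ContinuousLinearMap.id ℂ X)) := by
    simp only [ContinuousLinearMap.coe_comp', ContinuousLinearEquiv.coe_coe]
    rw [Set.range_comp, Function.Surjective.range_comp F.surjective]
  rw [hr]
  exact E.toHomeomorph.isClosed_image
end

section
/- Let T ∈ B(X) and S ∈ B(Y) be compact operators on Banach spaces that are equivalent after extension. Then there exist bounded operators G ∈ B(Y, X), H ∈ B(X, Y) and a finite rank operator R ∈ B(X) such that T = G S H + R. -/
/-!
Write `a, c, e, f` for the blocks `E₁₁, E₁₂, E₂₁, E₂₂` of `E`, `b, d` for the blocks `F₁₁, F₂₁`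
of `F`, `g` for the block `(F⁻¹)₁₂` and `h, k` for the blocks `(E⁻¹)₂₁, (E⁻¹)₂₂`. The first column
of `T ⊕ 1 = E (S ⊕ 1) F` reads `T = a S b + c d` and `0 = e S b + f d`, its second column after
multiplying by `F⁻¹` on the right gives `c = T g`, and the `(2,2)` entry of `E⁻¹ E = 1` reads
`h c + k f = 1`. So `k f = 1 - h T g` is a compact perturbation of the identity, hence Fredholm,
and has a left inverse `W` modulo a finite rank operator `P`. Then
`c d = c (W k f + P) d = - c W k e S b + c P d`, i.e. `T = (a - c W k e) S b + c P d`.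
-/

open ContinuousLinearMap Filter Topology

theorem IsCompactOperator.isCompactOperator_id_of_isOpenMap {R E F : Type*} [Semiring R]
    [TopologicalSpace E] [AddCommMonoid E] [Module R E] [TopologicalSpace F] [AddCommMonoid F]
    [Module R F] {f : E →ₗ[R] F} (hf : IsCompactOperator f) (hf_open : IsOpenMap f) :
    IsCompactOperator (id : F → F) := by
  obtain ⟨V, hV, C, hC, hVC⟩ := (isCompactOperator_iff_exists_mem_nhds_image_subset_compact f).mp hf
  exact (isCompactOperator_iff_exists_mem_nhds_image_subset_compact _).mpr
    ⟨f '' V, by simpa using hf_open.image_mem_nhds hV, C, hC, by simpa using hVC⟩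

namespace IsCompactOperator

variable {𝕜 Z : Type*} [RCLike 𝕜] [NormedAddCommGroup Z] [NormedSpace 𝕜 Z]
  {K : Z →L[𝕜] Z}

theorem finiteDimensional_ker_one_sub [CompleteSpace Z] (hK : IsCompactOperator K) :
    FiniteDimensional 𝕜 (1 - K).ker := by
  set N := (1 - K).ker
  have hKN : ∀ x ∈ N, K x = x := fun x hx => (sub_eq_zero.mp hx).symm
  have : CompleteSpace N := (isClosed_ker _).completeSpace_coe
  have hres := hK.restrict' (f := K.toLinearMap) (V := N) fun x hx => (hKN x hx).symm ▸ hx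
  have hid : ⇑(K.toLinearMap.restrict fun x hx => (hKN x hx).symm ▸ hx) = id :=
    funext fun x => Subtype.ext (hKN x x.2)
  exact .of_isCompactOperator_id (hid ▸ hres)

theorem exists_antilipschitzWith_domRestrict_one_sub (hK : IsCompactOperator K)
    {V : Submodule 𝕜 Z} (hV : IsClosed (V : Set Z)) (hVK : Disjoint V (1 - K).ker) :
    ∃ C, AntilipschitzWith C ((1 - K).domRestrict V) := by
  rw [antilipschitzWith_iff_exists_mul_le_norm]
  by_contra! h
  have hunit : ∀ n : ℕ, ∃ x : V, ‖x‖ = 1 ∧ ‖(1 - K) x‖ < 1 / (n + 1) := by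
    intro n
    obtain ⟨x, hx⟩ := h (1 / (n + 1)) (by positivity)
    have hx0 : x ≠ 0 := by rintro rfl; simp at hx
    refine ⟨(‖x‖⁻¹ : 𝕜) • x, norm_smul_inv_norm hx0, ?_⟩
    calc ‖(1 - K) ((‖x‖⁻¹ : 𝕜) • x : V)‖ = ‖x‖⁻¹ * ‖(1 - K).domRestrict V x‖ := by
          simp [norm_smul]
      _ < ‖x‖⁻¹ * (1 / (n + 1) * ‖x‖) := by gcongr
      _ = 1 / (n + 1) := by field_simp
  choose x hx1 hxK using hunit
  obtain ⟨C, hC, hKC⟩ := hK.image_closedBall_subset_compact 1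
  obtain ⟨w, -, φ, hφ, hKw⟩ := hC.tendsto_subseq (x := fun n => K (x n))
    fun n => hKC ⟨x n, mem_closedBall_zero_iff.mpr (hx1 n).le, rfl⟩
  have hK0 : Tendsto (fun n => (1 - K) (x (φ n))) atTop (𝓝 0) :=
    squeeze_zero_norm (fun n => (hxK (φ n)).le)
      (tendsto_one_div_add_atTop_nhds_zero_nat.comp hφ.tendsto_atTop)
  have hxw : Tendsto (fun n => (x (φ n) : Z)) atTop (𝓝 w) := by
    simpa using hK0.add hKw
  have hwV : w ∈ V := hV.mem_of_tendsto hxw (.of_forall fun n => (x (φ n)).2)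
  have hwK : (1 - K) w = 0 :=
    tendsto_nhds_unique (((1 - K).continuous.tendsto w).comp hxw) hK0
  have hw1 : ‖w‖ = 1 :=
    tendsto_nhds_unique ((continuous_norm.tendsto w).comp hxw) (by
      simpa [Function.comp_def] using tendsto_const_nhds.congr fun n => (hx1 (φ n)).symm)
  simp [Submodule.disjoint_def.mp hVK w hwV hwK] at hw1

theorem isStrictMap_one_sub_and_isClosed_range [CompleteSpace Z] (hK : IsCompactOperator K) :
    IsStrictMap ⇑(1 - K : Z →L[𝕜] Z) ∧ IsClosed ((1 - K : Z →L[𝕜] Z).range : Set Z) := by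
  have hN := hK.finiteDimensional_ker_one_sub
  obtain ⟨V, hV⟩ := (Submodule.ClosedComplemented.of_finiteDimensional (1 - K).ker).exists_isTopCompl
  have hVclosed : IsClosed (V : Set Z) := hV.isClosed'
  have : V.CoFG := (Submodule.fg_iff_finiteDimensional _).mpr hN |>.cofg_of_isCompl hV.isCompl
  have : CompleteSpace V := hVclosed.completeSpace_coe
  obtain ⟨C, hC⟩ := hK.exists_antilipschitzWith_domRestrict_one_sub hVclosed hV.isCompl.disjoint.symm
  rw [isStrictMap_isClosed_range_iff_restrict _ V hVclosed]
  have hunif := ((1 - K).domRestrict V).uniformContinuous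
  exact ⟨(hC.isUniformEmbedding hunif).isEmbedding.isStrictMap,
    by rw [LinearMap.coe_range]; exact hC.isClosed_range hunif⟩

theorem finiteDimensional_quotient_range_one_sub [CompleteSpace Z]
    [IsClosed ((1 - K : Z →L[𝕜] Z).range : Set Z)] (hK : IsCompactOperator K) :
    FiniteDimensional 𝕜 (Z ⧸ (1 - K : Z →L[𝕜] Z).range) := by
  set q := (1 - K : Z →L[𝕜] Z).range.mkQL
  have hq : q ∘L K = q := ContinuousLinearMap.ext fun x =>
    ((Submodule.Quotient.eq _).mpr (LinearMap.mem_range_self _ x)).symm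
  have hq_compact : IsCompactOperator q := by
    rw [← hq]
    exact hK.clm_comp q
  exact .of_isCompactOperator_id <|
    hq_compact.isCompactOperator_id_of_isOpenMap (Submodule.isOpenMap_mkQ _)

theorem isFredholm_one_sub [CompleteSpace Z] (hK : IsCompactOperator K) : (1 - K).IsFredholm :=
  have ⟨hstrict, hclosed⟩ := hK.isStrictMap_one_sub_and_isClosed_range
  have := hK.finiteDimensional_ker_one_sub
  { isStrictMap := hstrict
    isClosed_range := hclosed
    finite_ker := this
    finite_coker := hK.finiteDimensional_quotient_range_one_sub
    closedComplemented_ker := .of_finiteDimensional _ }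

theorem exists_comp_one_sub_eq_one_sub [CompleteSpace Z] (hK : IsCompactOperator K) :
    ∃ W P : Z →L[𝕜] Z, (P : Z →ₗ[𝕜] Z).HasFiniteRange ∧ W ∘L (1 - K) = 1 - P := by
  obtain ⟨W, hW, -⟩ := hK.isFredholm_one_sub.exists_isQuasiInverse
  refine ⟨W, 1 - W ∘L (1 - K), ?_, by abel⟩
  have hfin := (LinearMap.FiniteRangeSetoid.equiv_iff_hasFiniteRange.mp hW).fg_range
  have hP : ((1 - W ∘L (1 - K) : Z →L[𝕜] Z) : Z →ₗ[𝕜] Z) =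
      -((W : Z →ₗ[𝕜] Z) ∘ₗ (1 - K : Z →L[𝕜] Z) - LinearMap.id) := by
    ext; simp
  rw [LinearMap.hasFiniteRange_iff_range, hP, LinearMap.range_neg]
  exact hfin

end IsCompactOperator

section Blocks

variable {R X Y : Type*} [Ring R] [TopologicalSpace X] [AddCommGroup X] [Module R X]
  [IsTopologicalAddGroup X] [TopologicalSpace Y] [AddCommGroup Y] [Module R Y]
  [IsTopologicalAddGroup Y]

theorem exists_blocks_of_prodMap_id_eq {T : X →L[R] X} {S : Y →L[R] Y}
    (E : (Y × X) ≃L[R] (X × Y)) (F : (X × Y) ≃L[R] (Y × X))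
    (hEF : T.prodMap (.id R Y) = (E : (Y × X) →L[R] (X × Y)) ∘L S.prodMap (.id R X) ∘L
      (F : (X × Y) →L[R] (Y × X))) :
    ∃ (a : Y →L[R] X) (b : X →L[R] Y) (c d g h : X →L[R] X) (e : Y →L[R] Y) (f : X →L[R] Y)
      (k : Y →L[R] X),
      T = a ∘L S ∘L b + c ∘L d ∧ e ∘L S ∘L b + f ∘L d = 0 ∧ c = T ∘L g ∧
        h ∘L c + k ∘L f = 1 := by
  have hEF' : ∀ v, (T v.1, v.2) = E (S (F v).1, (F v).2) := fun v => by
    simpa [Prod.map] using DFunLike.congr_fun hEF v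
  have hE : ∀ u v, E (u, v) = E (u, 0) + E (0, v) := fun u v => by
    rw [← map_add, Prod.mk_add_mk, add_zero, zero_add]
  have hE_symm : ∀ u v, E.symm (u, v) = E.symm (u, 0) + E.symm (0, v) := fun u v => by
    rw [← map_add, Prod.mk_add_mk, add_zero, zero_add]
  have hTg : ∀ x, T (F.symm (0, x)).1 = (E (0, x)).1 := fun x => by
    simpa using congrArg Prod.fst (hEF' (F.symm (0, x)))
  refine ⟨fst R X Y ∘L E ∘L inl R Y X, fst R Y X ∘L F ∘L inl R X Y,
    fst R X Y ∘L E ∘L inr R Y X, snd R Y X ∘L F ∘L inl R X Y, fst R X Y ∘L F.symm ∘L inr R Y X,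
    snd R Y X ∘L E.symm ∘L inl R X Y, snd R X Y ∘L E ∘L inl R Y X,
    snd R X Y ∘L E ∘L inr R Y X, snd R Y X ∘L E.symm ∘L inr R X Y, ?_, ?_, ?_, ?_⟩
  · ext x
    have := congrArg Prod.fst (hEF' (x, 0))
    rw [hE] at this
    simpa using this
  · ext x
    have := congrArg Prod.snd (hEF' (x, 0))
    rw [hE] at this
    simpa using this.symm
  · ext x
    exact (hTg x).symm
  · ext x
    have := congrArg Prod.snd (E.symm_apply_apply (0, x))
    rw [← Prod.mk.eta (p := E (0, x)), hE_symm] at this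
    simpa [hTg] using this

theorem eq_sub_comp_add_comp_of_comp_eq_one_sub {T : X →L[R] X} {S : Y →L[R] Y}
    {a : Y →L[R] X} {b : X →L[R] Y} {c d W P : X →L[R] X} {e : Y →L[R] Y} {f : X →L[R] Y}
    {k : Y →L[R] X} (hT : T = a ∘L S ∘L b + c ∘L d) (h0 : e ∘L S ∘L b + f ∘L d = 0)
    (hW : W ∘L k ∘L f = 1 - P) :
    T = (a - c ∘L W ∘L k ∘L e) ∘L S ∘L b + c ∘L P ∘L d := by
  ext x
  have h0x : e (S (b x)) = -f (d x) := eq_neg_of_add_eq_zero_left (DFunLike.congr_fun h0 x)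
  have hWx : W (k (f (d x))) = d x - P (d x) := DFunLike.congr_fun hW (d x)
  rw [hT]
  simp only [add_apply, sub_apply, comp_apply, map_neg, map_sub, h0x, hWx]
  abel

end Blocks

theorem exists_finite_rank_perturbed_conjugation_general
    (X Y : Type*) [NormedAddCommGroup X] [NormedSpace ℂ X] [CompleteSpace X]
    [NormedAddCommGroup Y] [NormedSpace ℂ Y] [CompleteSpace Y]
    (T : X →L[ℂ] X) (S : Y →L[ℂ] Y)
    (hT : IsCompactOperator T)
    (hEAE : ∃ (E : (Y × X) ≃L[ℂ] (X × Y)) (F : (X × Y) ≃L[ℂ] (Y × X)),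
      T.prodMap (ContinuousLinearMap.id ℂ Y) =
        (E : (Y × X) →L[ℂ] (X × Y)) ∘L
          (S.prodMap (ContinuousLinearMap.id ℂ X)) ∘L
            (F : (X × Y) →L[ℂ] (Y × X))) :
    ∃ (G : Y →L[ℂ] X) (H : X →L[ℂ] Y) (R : X →L[ℂ] X),
      FiniteDimensional ℂ (LinearMap.range (R : X →ₗ[ℂ] X)) ∧ T = G ∘L S ∘L H + R := by
  obtain ⟨E, F, hEF⟩ := hEAE
  obtain ⟨a, b, c, d, g, h, e, f, k, hT_eq, h_zero, hc, h_one⟩ :=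
    exists_blocks_of_prodMap_id_eq E F hEF
  have hK : IsCompactOperator (h ∘L c) := hc ▸ (hT.comp_clm g).clm_comp h
  obtain ⟨W, P, hP, hWP⟩ := hK.exists_comp_one_sub_eq_one_sub
  have hWkf : W ∘L k ∘L f = 1 - P := by rw [← hWP, ← h_one, add_sub_cancel_left]
  refine ⟨a - c ∘L W ∘L k ∘L e, b, c ∘L P ∘L d, ?_,
    eq_sub_comp_add_comp_of_comp_eq_one_sub hT_eq h_zero hWkf⟩
  exact Module.Finite.iff_fg.mpr ((hP.comp_right (d : X →ₗ[ℂ] X)).comp_left (c : X →ₗ[ℂ] X))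

/-- Compact operators that are equivalent after extension satisfy a finite
rank perturbed conjugation relationship `T = G S H + R`. -/
theorem exists_finite_rank_perturbed_conjugation
    (X Y : Type*) [NormedAddCommGroup X] [NormedSpace ℂ X] [CompleteSpace X]
    [NormedAddCommGroup Y] [NormedSpace ℂ Y] [CompleteSpace Y]
    (T : X →L[ℂ] X) (S : Y →L[ℂ] Y)
    (hT : IsCompactOperator T) (hS : IsCompactOperator S)
    (hEAE : ∃ (E : (Y × X) ≃L[ℂ] (X × Y)) (F : (X × Y) ≃L[ℂ] (Y × X)),
      T.prodMap (ContinuousLinearMap.id ℂ Y) =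
        (E : (Y × X) →L[ℂ] (X × Y)) ∘L
          (S.prodMap (ContinuousLinearMap.id ℂ X)) ∘L
            (F : (X × Y) →L[ℂ] (Y × X))) :
    ∃ (G : Y →L[ℂ] X) (H : X →L[ℂ] Y) (R : X →L[ℂ] X),
      FiniteDimensional ℂ (LinearMap.range (R : X →ₗ[ℂ] X)) ∧ T = G ∘L S ∘L H + R :=
  exists_finite_rank_perturbed_conjugation_general X Y T S hT hEAE
end

section
/- Let T ∈ B(X) and S ∈ B(Y) be compact operators on Banach spaces that are equivalent after extension. Then T has finite rank if and only if S has finite rank. -/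
open Set

/-!
A compact operator has finite rank exactly when its range is closed: if the range is closed it is a
Banach space, the operator maps onto it openly by the open mapping theorem, and so the identity of
the range is compact. Closedness of the range survives equivalence after extension, because the
range of `T ⊕ id` is `range T × Y` and `E`, `F` are isomorphisms.
-/

theorem IsCompactOperator.of_comp_isOpenMap {M₁ M₂ M₃ : Type*} [Zero M₁] [TopologicalSpace M₁]
    [Zero M₂] [TopologicalSpace M₂] [TopologicalSpace M₃] {f : M₁ → M₂} {g : M₂ → M₃}
    (hf : IsOpenMap f) (hf₀ : f 0 = 0) (hgf : IsCompactOperator (g ∘ f)) :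
    IsCompactOperator g := by
  obtain ⟨K, hK, hK₀⟩ := hgf
  refine ⟨K, hK, Filter.mem_of_superset ?_ (image_preimage_subset f (g ⁻¹' K))⟩
  exact hf₀ ▸ hf.image_mem_nhds hK₀

section CompactOperator

variable {𝕜 X Y : Type*} [NontriviallyNormedField 𝕜] [CompleteSpace 𝕜]
  [NormedAddCommGroup X] [NormedSpace 𝕜 X] [CompleteSpace X]
  [NormedAddCommGroup Y] [NormedSpace 𝕜 Y] [CompleteSpace Y]

theorem IsCompactOperator.finiteDimensional_range_of_isClosed {T : X →L[𝕜] Y}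
    (hT : IsCompactOperator T) (hclosed : IsClosed (range T)) :
    FiniteDimensional 𝕜 (LinearMap.range (T : X →ₗ[𝕜] Y)) := by
  set R := LinearMap.range (T : X →ₗ[𝕜] Y)
  have : CompleteSpace R := hclosed.completeSpace_coe
  set T' : X →L[𝕜] R := T.codRestrict R (LinearMap.mem_range_self _)
  have hT' : IsCompactOperator T' := hT.codRestrict _ hclosed
  exact .of_isCompactOperator_id <|
    hT'.of_comp_isOpenMap (T'.isOpenMap (by rintro ⟨_, x, rfl⟩; exact ⟨x, rfl⟩)) (map_zero T')

theorem IsCompactOperator.finiteDimensional_range_iff_isClosed {T : X →L[𝕜] Y}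
    (hT : IsCompactOperator T) :
    FiniteDimensional 𝕜 (LinearMap.range (T : X →ₗ[𝕜] Y)) ↔ IsClosed (range T) :=
  ⟨fun _ ↦ (LinearMap.range (T : X →ₗ[𝕜] Y)).closed_of_finiteDimensional,
    hT.finiteDimensional_range_of_isClosed⟩

end CompactOperator

theorem isClosed_range_prodMap_id_iff {A B C : Type*} [TopologicalSpace B] [TopologicalSpace C]
    [Nonempty C] {f : A → B} : IsClosed (range (Prod.map f (id : C → C))) ↔ IsClosed (range f) := by
  obtain ⟨c⟩ := ‹Nonempty C›
  rw [range_prodMap, range_id]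
  refine ⟨fun h ↦ ?_, fun h ↦ h.prod isClosed_univ⟩
  rw [← mk_preimage_prod_left (s := range f) (mem_univ c)]
  exact h.preimage (by fun_prop)

theorem isClosed_range_iff_of_eq_comp {A B C D : Type*} [TopologicalSpace B] [TopologicalSpace D]
    {f : A → B} {g : C → D} (e : D ≃ₜ B) {h : A → C} (hh : Function.Surjective h)
    (hf : f = e ∘ g ∘ h) : IsClosed (range f) ↔ IsClosed (range g) := by
  rw [hf, range_comp, range_comp, hh.range_eq, image_univ, e.isClosed_image]

/-- Compact operators that are equivalent after extension have
finite rank simultaneously. -/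
theorem finite_rank_iff_of_equivalent_after_extension
    (X Y : Type*) [NormedAddCommGroup X] [NormedSpace ℂ X] [CompleteSpace X]
    [NormedAddCommGroup Y] [NormedSpace ℂ Y] [CompleteSpace Y]
    (T : X →L[ℂ] X) (S : Y →L[ℂ] Y)
    (hT : IsCompactOperator T) (hS : IsCompactOperator S)
    (hEAE : ∃ (E : (Y × X) ≃L[ℂ] (X × Y)) (F : (X × Y) ≃L[ℂ] (Y × X)),
      T.prodMap (ContinuousLinearMap.id ℂ Y) =
        (E : (Y × X) →L[ℂ] (X × Y)) ∘L
          (S.prodMap (ContinuousLinearMap.id ℂ X)) ∘L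
            (F : (X × Y) →L[ℂ] (Y × X))) :
    FiniteDimensional ℂ (LinearMap.range (T : X →ₗ[ℂ] X)) ↔ FiniteDimensional ℂ (LinearMap.range (S : Y →ₗ[ℂ] Y)) := by
  obtain ⟨E, F, hEF⟩ := hEAE
  rw [hT.finiteDimensional_range_iff_isClosed, hS.finiteDimensional_range_iff_isClosed,
    ← isClosed_range_prodMap_id_iff (f := T) (C := Y),
    ← isClosed_range_prodMap_id_iff (f := S) (C := X)]
  exact isClosed_range_iff_of_eq_comp E.toHomeomorph F.surjective (congrArg DFunLike.coe hEF)
end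

section
/- Let 1 ≤ p ≠ q < ∞. Then no bounded operators T ∈ B(ℓᵖ) and S ∈ B(ℓ^q) are equivalent after one-sided extension. -/
/-!
Suppose `T = E ∘ diag(S, id) ∘ F`. Then `A = fst ∘ F` and `B = F⁻¹ ∘ inl` satisfy `A ∘ B = id`,
so `ℓ^q` embeds complementably into `ℓ^p`. Instead of Pitt's theorem, a gliding hump shows
that this fails for `p ≠ q`. The images under `B` of suitable
differences `e_m - e_n` of unit vectors of `ℓ^q` are coordinatewise null in `ℓ^p` and bounded
above and below, so a subsequence of them is a small perturbation of a disjointly supported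
sequence. Sums of `N` disjointly supported vectors of comparable norm have norm of order
`N^(1/p)` in `ℓ^p`, while the corresponding sums of the `e_m - e_n` have norm of order `N^(1/q)`.
As `A` and `B` are bounded, these orders agree, forcing `p = q`.
-/

open ContinuousLinearMap
open scoped ENNReal

open Filter Finset Asymptotics Topology

theorem isLittleO_rpow_rpow_atTop {r s : ℝ} (h : r < s) :
    (fun x : ℝ => x ^ r) =o[atTop] fun x => x ^ s := by
  refine (isLittleO_iff_tendsto' ?_).2 ?_
  · filter_upwards [eventually_gt_atTop 0] with x hx hxs
    exact absurd hxs (Real.rpow_pos_of_pos hx s).ne'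
  · refine ((neg_sub s r) ▸ tendsto_rpow_neg_atTop (sub_pos.2 h)).congr' ?_
    filter_upwards [eventually_gt_atTop 0] with x hx
    rw [Real.rpow_sub hx]

theorem not_isTheta_natCast_rpow {r s : ℝ} (h : r ≠ s) :
    ¬ (fun N : ℕ => (N : ℝ) ^ r) =Θ[atTop] fun N => (N : ℝ) ^ s := by
  wlog hrs : r < s generalizing r s
  · exact fun hΘ => this h.symm (h.lt_or_gt.resolve_left hrs) hΘ.symm
  refine fun hΘ => ((isLittleO_rpow_rpow_atTop hrs).comp_tendsto
    tendsto_natCast_atTop_atTop).not_isBigO ?_ hΘ.2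
  refine Eventually.frequently ?_
  filter_upwards [eventually_gt_atTop 0] with N hN
  exact (Real.rpow_pos_of_pos (Nat.cast_pos.2 hN) r).ne'

namespace lp

section Disjoint

variable {α : Type*} {E : α → Type*} [∀ i, NormedAddCommGroup (E i)] {p : ℝ≥0∞}

theorem norm_add_rpow_of_disjoint (hp : 0 < p.toReal) {f g : lp E p}
    (h : ∀ i, f i = 0 ∨ g i = 0) :
    ‖f + g‖ ^ p.toReal = ‖f‖ ^ p.toReal + ‖g‖ ^ p.toReal := by
  refine (lp.hasSum_norm hp (f + g)).unique <|
    ((lp.hasSum_norm hp f).add (lp.hasSum_norm hp g)).congr_fun fun i => ?_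
  rcases h i with h0 | h0 <;> simp [h0, Real.zero_rpow hp.ne']

theorem norm_sum_rpow_of_pairwise_disjoint {ι : Type*} (hp : 0 < p.toReal) {v : ι → lp E p}
    (hv : Pairwise fun j j' => ∀ i, v j i = 0 ∨ v j' i = 0) (s : Finset ι) :
    ‖∑ j ∈ s, v j‖ ^ p.toReal = ∑ j ∈ s, ‖v j‖ ^ p.toReal := by
  classical
  induction s using Finset.induction_on with
  | empty => simp [Real.zero_rpow hp.ne']
  | insert a s ha ih =>
    rw [sum_insert ha, sum_insert ha, ← ih]
    refine norm_add_rpow_of_disjoint hp fun i => or_iff_not_imp_left.2 fun hai => ?_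
    rw [coeFn_sum, Finset.sum_apply]
    exact sum_eq_zero fun j hj => (hv (ne_of_mem_of_not_mem hj ha).symm i).resolve_left hai

theorem isTheta_sum_range_of_pairwise_disjoint (hp : 0 < p.toReal) {v : ℕ → lp E p}
    (hv : Pairwise fun j j' => ∀ i, v j i = 0 ∨ v j' i = 0) {c C : ℝ} (hc : 0 < c)
    (hlow : ∀ j, c ≤ ‖v j‖) (hup : ∀ j, ‖v j‖ ≤ C) :
    (fun N => ∑ j ∈ range N, v j) =Θ[atTop] fun N => (N : ℝ) ^ p.toReal⁻¹ := by
  have hnorm (N : ℕ) : ‖∑ j ∈ range N, v j‖ = (∑ j ∈ range N, ‖v j‖ ^ p.toReal) ^ p.toReal⁻¹ := by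
    rw [← norm_sum_rpow_of_pairwise_disjoint hp hv, Real.rpow_rpow_inv (norm_nonneg' _) hp.ne']
  have hconst {x : ℝ} (hx : 0 ≤ x) (N : ℕ) :
      (∑ _j ∈ range N, x ^ p.toReal) ^ p.toReal⁻¹ = x * (N : ℝ) ^ p.toReal⁻¹ := by
    rw [sum_const, card_range, nsmul_eq_mul, Real.mul_rpow (Nat.cast_nonneg N) (by positivity),
      Real.rpow_rpow_inv hx hp.ne', mul_comm]
  have hpow {x y : ℝ} (hx : 0 ≤ x) (hxy : x ≤ y) : x ^ p.toReal ≤ y ^ p.toReal :=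
    Real.rpow_le_rpow hx hxy hp.le
  refine ⟨IsBigO.of_bound C (Eventually.of_forall fun N => ?_),
    IsBigO.of_bound c⁻¹ (Eventually.of_forall fun N => ?_)⟩
  · have hC : 0 ≤ C := (norm_nonneg' _).trans (hup 0)
    rw [hnorm, Real.norm_of_nonneg (by positivity), ← hconst hC]
    exact Real.rpow_le_rpow (sum_nonneg fun j _ => Real.rpow_nonneg (norm_nonneg' _) _)
      (sum_le_sum fun j _ => hpow (norm_nonneg' _) (hup j)) (by positivity)
  · rw [Real.norm_of_nonneg (by positivity), le_inv_mul_iff₀ hc, ← hconst hc.le, hnorm]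
    exact Real.rpow_le_rpow (by positivity)
      (sum_le_sum fun j _ => hpow hc.le (hlow j)) (by positivity)

end Disjoint

section Single

variable {α : Type*} [DecidableEq α] {E : α → Type*} [∀ i, NormedAddCommGroup (E i)]
  {p : ℝ≥0∞}

theorem sum_single_apply_of_notMem (f : ∀ i, E i) {s : Finset α} {j : α} (hj : j ∉ s) :
    (∑ i ∈ s, lp.single p i (f i)) j = 0 := by
  rw [coeFn_sum, Finset.sum_apply]
  exact sum_eq_zero fun i hi => lp.single_apply_ne p i _ (ne_of_mem_of_not_mem hi hj).symm

theorem norm_sum_single_le (hp : 0 < p.toReal) (f : lp E p) (s : Finset α) :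
    ‖∑ i ∈ s, lp.single p i (f i)‖ ≤ ‖f‖ := by
  refine (Real.rpow_le_rpow_iff (norm_nonneg' _) (norm_nonneg' _) hp).1 ?_
  rw [lp.norm_sum_single hp]
  exact lp.sum_rpow_le_norm_rpow hp f s

variable [Fact (1 ≤ p)]

theorem tendsto_sum_single_of_tendsto_apply {w : ℕ → lp E p}
    (hw : ∀ i, Tendsto (fun n => w n i) atTop (𝓝 0)) (s : Finset α) :
    Tendsto (fun n => ∑ i ∈ s, lp.single p i (w n i)) atTop (𝓝 0) := by
  simpa using tendsto_finsetSum s fun i _ =>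
    ((isometry_single i).continuous.tendsto' 0 0 (lp.single_zero p i)).comp (hw i)

end Single

section GlidingHump

variable {E : ℕ → Type*} [∀ i, NormedAddCommGroup (E i)] {p : ℝ≥0∞}

theorem exists_strictMono_tendsto_apply [∀ i, ProperSpace (E i)] (hp : p ≠ 0)
    {u : ℕ → lp E p} {C : ℝ} (hu : ∀ n, ‖u n‖ ≤ C) :
    ∃ φ : ℕ → ℕ, StrictMono φ ∧ ∃ x : ∀ i, E i,
      ∀ i, Tendsto (fun n => u (φ n) i) atTop (𝓝 (x i)) := by
  obtain ⟨x, -, φ, hφ, hx⟩ := (isCompact_univ_pi fun i => isCompact_closedBall (0 : E i) C)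
    |>.isSeqCompact fun n => Set.mem_univ_pi.2 fun i =>
      mem_closedBall_zero_iff.2 <| (norm_apply_le_norm hp (u n) i).trans (hu n)
  exact ⟨φ, hφ, x, tendsto_pi_nhds.1 hx⟩

variable [Fact (1 ≤ p)]

theorem exists_strictMono_pairwise_disjoint_approx (hp : p ≠ ⊤) {w : ℕ → lp E p}
    (hw : ∀ i, Tendsto (fun n => w n i) atTop (𝓝 0)) {δ : ℕ → ℝ} (hδ : ∀ j, 0 < δ j)
    (hδ_anti : Antitone δ) :
    ∃ k : ℕ → ℕ, StrictMono k ∧ ∃ v : ℕ → lp E p,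
      (Pairwise fun j j' => ∀ i, v j i = 0 ∨ v j' i = 0) ∧
        ∀ j, ‖w (k j) - v j‖ ≤ δ j ∧ ‖v j‖ ≤ ‖w (k j)‖ := by
  have hp₀ : 0 < p.toReal := ENNReal.toReal_pos (zero_lt_one.trans_le Fact.out).ne' hp
  let head (m : ℕ) (f : lp E p) : lp E p := ∑ i ∈ range m, lp.single p i (f i)
  /- A triple `(n, a, b)` records that, up to `δ a`, the vector `w n` lives on `[a, b)`;
  later triples must use a later `n` and start after `b`. -/
  obtain ⟨x, hxP, hxr⟩ := exists_seq_of_forall_finset_exists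
    (fun x : ℕ × ℕ × ℕ => x.2.1 < x.2.2 ∧ ‖head x.2.1 (w x.1)‖ ≤ δ x.2.1 / 2 ∧
      ‖w x.1 - head x.2.2 (w x.1)‖ ≤ δ x.2.1 / 2)
    (fun x y => x.1 < y.1 ∧ x.2.2 ≤ y.2.1) fun s _ => by
      set a := s.sup fun x => x.2.2
      obtain ⟨n, hn_head, hn⟩ := ((tendsto_zero_iff_norm_tendsto_zero.1
        (tendsto_sum_single_of_tendsto_apply hw (range a))).eventually
          (eventually_le_nhds (half_pos (hδ a))) |>.and
          (eventually_gt_atTop (s.sup Prod.fst))).exists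
      obtain ⟨b, hb_tail, hb⟩ := ((tendsto_iff_norm_sub_tendsto_zero.1
        (lp.hasSum_single hp (w n)).tendsto_sum_nat).eventually
          (eventually_le_nhds (half_pos (hδ a))) |>.and (eventually_gt_atTop a)).exists
      refine ⟨(n, a, b), ⟨hb, hn_head, by rwa [norm_sub_rev]⟩, fun x hx =>
        ⟨(le_sup (f := Prod.fst) hx).trans_lt hn, le_sup (f := fun x => x.2.2) hx⟩⟩
  let v (j : ℕ) : lp E p := ∑ i ∈ Ico (x j).2.1 (x j).2.2, lp.single p i (w (x j).1 i)
  refine ⟨fun j => (x j).1, fun m n h => (hxr m n h).1, v, ?_, fun j =>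
    ⟨?_, norm_sum_single_le hp₀ _ _⟩⟩
  · have hdisj {m n : ℕ} (h : m < n) (i : ℕ) : v m i = 0 ∨ v n i = 0 := by
      have := (hxr m n h).2
      by_cases hi : i < (x m).2.2
      · exact .inr <| sum_single_apply_of_notMem _ (by simp only [mem_Ico]; omega)
      · exact .inl <| sum_single_apply_of_notMem _ (by simp only [mem_Ico]; omega)
    intro m n hmn i
    rcases hmn.lt_or_gt with h | h
    exacts [hdisj h i, (hdisj h i).symm]
  · have ha : StrictMono fun j => (x j).2.1 := fun m n h => (hxP m).1.trans_le (hxr m n h).2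
    obtain ⟨hab, hhead, htail⟩ := hxP j
    have hsplit : w (x j).1 - v j =
        (w (x j).1 - head (x j).2.2 (w (x j).1)) + head (x j).2.1 (w (x j).1) := by
      simp only [head, v, ← sum_range_add_sum_Ico _ hab.le]
      abel
    calc ‖w (x j).1 - v j‖ ≤ δ (x j).2.1 / 2 + δ (x j).2.1 / 2 :=
          hsplit ▸ norm_add_le_of_le htail hhead
      _ = δ (x j).2.1 := add_halves _
      _ ≤ δ j := hδ_anti ha.le_apply

theorem exists_strictMono_isTheta_sum_range (hp : p ≠ ⊤) {w : ℕ → lp E p}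
    (hw : ∀ i, Tendsto (fun n => w n i) atTop (𝓝 0))
    {c C : ℝ} (hc : 0 < c) (hlow : ∀ n, c ≤ ‖w n‖) (hup : ∀ n, ‖w n‖ ≤ C) :
    ∃ k : ℕ → ℕ, StrictMono k ∧
      (fun N => ∑ j ∈ range N, w (k j)) =Θ[atTop] fun N => (N : ℝ) ^ p.toReal⁻¹ := by
  have hp₀ : 0 < p.toReal := ENNReal.toReal_pos (zero_lt_one.trans_le Fact.out).ne' hp
  set δ : ℕ → ℝ := fun j => c / 2 * (1 / 2) ^ j
  obtain ⟨k, hk, v, hv, hwv⟩ := exists_strictMono_pairwise_disjoint_approx hp hw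
    (δ := δ) (fun j => by positivity) fun m n h =>
      mul_le_mul_of_nonneg_left (pow_le_pow_of_le_one (by norm_num) (by norm_num) h) (by positivity)
  refine ⟨k, hk, ?_⟩
  have hδ_le (j : ℕ) : δ j ≤ c / 2 :=
    mul_le_of_le_one_right (by positivity) (pow_le_one₀ (by norm_num) (by norm_num))
  have hV := isTheta_sum_range_of_pairwise_disjoint hp₀ hv (half_pos hc)
    (fun j => by linarith [norm_sub_norm_le (w (k j)) (v j), (hwv j).1, hlow (k j), hδ_le j])
    fun j => (hwv j).2.trans (hup _)
  have herr : (fun N => ∑ j ∈ range N, (w (k j) - v j)) =O[atTop] fun _ => (1 : ℝ) := by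
    refine IsBigO.of_bound c (Eventually.of_forall fun N => ?_)
    calc ‖∑ j ∈ range N, (w (k j) - v j)‖ ≤ ∑ j ∈ range N, δ j :=
          norm_sum_le_of_le _ fun j _ => (hwv j).1
      _ = c / 2 * ∑ j ∈ range N, (1 / 2 : ℝ) ^ j := (mul_sum ..).symm
      _ ≤ c / 2 * 2 := by gcongr; exact sum_geometric_two_le N
      _ = c * ‖(1 : ℝ)‖ := by simp
  have hgrowth : (fun _ => (1 : ℝ)) =o[atTop] fun N : ℕ => (N : ℝ) ^ p.toReal⁻¹ := by
    refine (isLittleO_one_left_iff ℝ).2 <| ((tendsto_rpow_atTop (inv_pos.2 hp₀)).comp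
      tendsto_natCast_atTop_atTop).congr fun N => ?_
    exact (Real.norm_of_nonneg (Real.rpow_nonneg N.cast_nonneg _)).symm
  have hsplit : (fun N => ∑ j ∈ range N, w (k j)) =
      (fun N => ∑ j ∈ range N, (w (k j) - v j)) + fun N => ∑ j ∈ range N, v j := by
    funext N
    simp [sum_sub_distrib]
  exact hsplit ▸ (herr.trans_isLittleO hgrowth).add_isTheta hV

end GlidingHump

theorem comp_ne_id_of_ne {𝕜 : Type*} [NontriviallyNormedField 𝕜] [ProperSpace 𝕜] {a b : ℝ≥0∞}
    [Fact (1 ≤ a)] [Fact (1 ≤ b)] (ha : a ≠ ⊤) (hb : b ≠ ⊤) (hab : a ≠ b)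
    (A : lp (fun _ : ℕ => 𝕜) a →L[𝕜] lp (fun _ : ℕ => 𝕜) b)
    (B : lp (fun _ : ℕ => 𝕜) b →L[𝕜] lp (fun _ : ℕ => 𝕜) a) :
    A ∘L B ≠ ContinuousLinearMap.id 𝕜 _ := by
  intro hAB
  have hAB' (y) : A (B y) = y := DFunLike.congr_fun hAB y
  have hb₀ : 0 < b := zero_lt_one.trans_le Fact.out
  let e (n : ℕ) : lp (fun _ : ℕ => 𝕜) b := lp.single b n 1
  have he (n : ℕ) : ‖e n‖ = 1 := by simp [e, lp.norm_single hb₀]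
  obtain ⟨φ, hφ, x, hx⟩ := exists_strictMono_tendsto_apply (zero_lt_one.trans_le Fact.out).ne'
    (u := fun n => B (e n)) fun n => (B.le_opNorm _).trans_eq (by rw [he, mul_one])
  /- `B e_n` need not be coordinatewise null (think of `b = 1`), but differences along a
  coordinatewise convergent subsequence are. -/
  let d (n : ℕ) := e (φ (2 * n + 1)) - e (φ (2 * n))
  have hd_norm (n : ℕ) : 1 ≤ ‖d n‖ ∧ ‖d n‖ ≤ 2 := by
    refine ⟨?_, (norm_sub_le _ _).trans_eq (by rw [he, he]; norm_num)⟩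
    have hne : φ (2 * n) ≠ φ (2 * n + 1) := hφ.injective.ne (by omega)
    simpa [d, e, hne] using norm_apply_le_norm hb₀.ne' (d n) (φ (2 * n + 1))
  have hd_disj : Pairwise fun m n => ∀ i, d m i = 0 ∨ d n i = 0 := by
    intro m n hmn i
    by_cases hi : i = φ (2 * m + 1) ∨ i = φ (2 * m)
    · right
      have h1 : i ≠ φ (2 * n + 1) := by
        rcases hi with rfl | rfl <;> exact hφ.injective.ne (by omega)
      have h2 : i ≠ φ (2 * n) := by
        rcases hi with rfl | rfl <;> exact hφ.injective.ne (by omega)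
      simp [d, e, h1, h2]
    · obtain ⟨h1, h2⟩ := not_or.1 hi
      left
      simp [d, e, h1, h2]
  have hw (i : ℕ) : Tendsto (fun n => B (d n) i) atTop (𝓝 0) := by
    have hodd : Tendsto (fun n => 2 * n + 1) atTop atTop :=
      tendsto_atTop_mono (fun n => show n ≤ 2 * n + 1 by omega) tendsto_id
    have heven : Tendsto (fun n => 2 * n) atTop atTop :=
      tendsto_atTop_mono (fun n => show n ≤ 2 * n by omega) tendsto_id
    simpa [d] using ((hx i).comp hodd).sub ((hx i).comp heven)
  have hAw (n : ℕ) : 1 ≤ ‖A‖ * ‖B (d n)‖ :=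
    (hd_norm n).1.trans (by simpa [hAB'] using A.le_opNorm (B (d n)))
  have hA : 0 < ‖A‖ := (norm_nonneg A).lt_of_ne fun h => by
    linarith [hAw 0, show ‖A‖ * ‖B (d 0)‖ = 0 by rw [← h, zero_mul]]
  obtain ⟨k, hk, hX⟩ := exists_strictMono_isTheta_sum_range ha hw (inv_pos.2 hA)
    (fun n => (inv_le_iff_one_le_mul₀' hA).2 (hAw n))
    fun n => (B.le_opNorm _).trans (mul_le_mul_of_nonneg_left (hd_norm n).2 (norm_nonneg B))
  have hY := isTheta_sum_range_of_pairwise_disjoint (ENNReal.toReal_pos hb₀.ne' hb)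
    (hd_disj.comp_of_injective hk.injective) one_pos (fun j => (hd_norm _).1) fun j => (hd_norm _).2
  have hXY : (fun N => ∑ j ∈ range N, B (d (k j))) =Θ[atTop]
      fun N => ∑ j ∈ range N, d (k j) := by
    simp_rw [← map_sum]
    exact ⟨B.isBigO_comp _ _,
      by simpa [hAB'] using A.isBigO_comp (fun N => B (∑ j ∈ range N, d (k j))) atTop⟩
  exact not_isTheta_natCast_rpow
    (inv_injective.ne ((ENNReal.toReal_eq_toReal_iff' ha hb).not.2 hab))
    (hX.symm.trans (hXY.trans hY))

end lp

/-- For `1 ≤ p ≠ q < ∞`, no bounded operators `T ∈ B(ℓᵖ)` and `S ∈ B(ℓ^q)`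
are equivalent after one-sided extension: there is no Banach space `Z` and invertible
operators `E : ℓ^q ⊕ Z → ℓᵖ`, `F : ℓᵖ → ℓ^q ⊕ Z` with `T = E ⬝ diag(S, id_Z) ⬝ F`,
nor the symmetric factorization with the roles of `T` and `S` exchanged. -/
theorem no_eaoe_between_different_lp
    (p q : ℝ≥0∞) [Fact (1 ≤ p)] [Fact (1 ≤ q)] (hp : p < ⊤) (hq : q < ⊤) (hpq : p ≠ q)
    (T : lp (fun _ : ℕ => ℂ) p →L[ℂ] lp (fun _ : ℕ => ℂ) p)
    (S : lp (fun _ : ℕ => ℂ) q →L[ℂ] lp (fun _ : ℕ => ℂ) q) :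
    ¬ ((∃ (Z : Type) (_ : NormedAddCommGroup Z) (_ : NormedSpace ℂ Z) (_ : CompleteSpace Z)
        (E : (lp (fun _ : ℕ => ℂ) q × Z) ≃L[ℂ] lp (fun _ : ℕ => ℂ) p)
        (F : lp (fun _ : ℕ => ℂ) p ≃L[ℂ] (lp (fun _ : ℕ => ℂ) q × Z)),
        T = (E : (lp (fun _ : ℕ => ℂ) q × Z) →L[ℂ] lp (fun _ : ℕ => ℂ) p) ∘L
          (S.prodMap (ContinuousLinearMap.id ℂ Z)) ∘L
            (F : lp (fun _ : ℕ => ℂ) p →L[ℂ] (lp (fun _ : ℕ => ℂ) q × Z))) ∨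
      (∃ (Z : Type) (_ : NormedAddCommGroup Z) (_ : NormedSpace ℂ Z) (_ : CompleteSpace Z)
        (E : (lp (fun _ : ℕ => ℂ) p × Z) ≃L[ℂ] lp (fun _ : ℕ => ℂ) q)
        (F : lp (fun _ : ℕ => ℂ) q ≃L[ℂ] (lp (fun _ : ℕ => ℂ) p × Z)),
        S = (E : (lp (fun _ : ℕ => ℂ) p × Z) →L[ℂ] lp (fun _ : ℕ => ℂ) q) ∘L
          (T.prodMap (ContinuousLinearMap.id ℂ Z)) ∘L
            (F : lp (fun _ : ℕ => ℂ) q →L[ℂ] (lp (fun _ : ℕ => ℂ) p × Z)))) := by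
  rintro (⟨Z, _, _, _, E, F, -⟩ | ⟨Z, _, _, _, E, F, -⟩)
  · exact lp.comp_ne_id_of_ne hp.ne hq.ne hpq (fst ℂ _ Z ∘L F) (F.symm ∘L inl ℂ _ Z) (by ext; simp)
  · exact lp.comp_ne_id_of_ne hq.ne hp.ne hpq.symm (fst ℂ _ Z ∘L F) (F.symm ∘L inl ℂ _ Z)
      (by ext; simp)
end

section
/- Let X and Y be infinite dimensional Banach spaces that are essentially incomparable. Then no compact operator S ∈ B(Y) is equivalent after extension to any operator T ∈ B(X). -/
/-!
Comparing the `Y → Y` corners of `diag(T, 1) = E diag(S, 1) F` gives `1 - A B = K` with `K`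
compact, since `K` factors through `S`. Essential incomparability makes `1 - B A` Fredholm, and
`A` maps the cokernel of `1 - B A` onto that of `1 - A B`, so the compact operator `K` has
finite codimensional range. Adding a finite dimensional complement of that range to the domain
yields a compact surjection onto `Y`; by the open mapping theorem the image of a neighbourhood of
`0` is then relatively compact, so `Y` is finite dimensional by Riesz's theorem.
-/

open ContinuousLinearMap

/-- A bounded operator is Fredholm if it has finite dimensional kernel, closed range,
and finite codimensional range. -/
def IsFredholmOp {X Y : Type*} [NormedAddCommGroup X] [NormedSpace ℂ X] [CompleteSpace X]
    [NormedAddCommGroup Y] [NormedSpace ℂ Y] [CompleteSpace Y] (f : X →L[ℂ] Y) : Prop :=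
  FiniteDimensional ℂ (LinearMap.ker (f : X →ₗ[ℂ] Y)) ∧ IsClosed (LinearMap.range (f : X →ₗ[ℂ] Y) : Set Y) ∧
    FiniteDimensional ℂ (Y ⧸ LinearMap.range (f : X →ₗ[ℂ] Y))

theorem LinearMap.finite_quotient_range_id_sub_comp {R M N : Type*} [Ring R]
    [AddCommGroup M] [Module R M] [AddCommGroup N] [Module R N] (A : M →ₗ[R] N) (B : N →ₗ[R] M)
    (h : Module.Finite R (M ⧸ range (id - B ∘ₗ A))) :
    Module.Finite R (N ⧸ range (id - A ∘ₗ B)) := by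
  have hA : range (id - B ∘ₗ A) ≤ (range (id - A ∘ₗ B)).comap A := by
    rintro _ ⟨x, rfl⟩
    exact ⟨A x, by simp⟩
  refine Module.Finite.of_surjective (Submodule.mapQ _ _ A hA) fun q ↦ ?_
  obtain ⟨y, rfl⟩ := Submodule.mkQ_surjective _ q
  refine ⟨Submodule.Quotient.mk (B y), ?_⟩
  rw [Submodule.mkQ_apply, Submodule.mapQ_apply, Submodule.Quotient.eq]
  exact ⟨-y, by simp [neg_add_eq_sub]⟩

theorem exists_isCompactOperator_id_sub_comp_of_prodMap_id_eq {R X Y : Type*} [Ring R]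
    [TopologicalSpace X] [AddCommGroup X] [Module R X]
    [TopologicalSpace Y] [AddCommGroup Y] [Module R Y] [IsTopologicalAddGroup Y]
    {T : X →L[R] X} {S : Y →L[R] Y} (hS : IsCompactOperator S)
    {E : Y × X →L[R] X × Y} {F : X × Y →L[R] Y × X}
    (h : T.prodMap (ContinuousLinearMap.id R Y) = E ∘L S.prodMap (ContinuousLinearMap.id R X) ∘L F) :
    ∃ (A : X →L[R] Y) (B : Y →L[R] X), IsCompactOperator (ContinuousLinearMap.id R Y - A ∘L B) := by
  refine ⟨snd R X Y ∘L E ∘L inr R Y X, snd R Y X ∘L F ∘L inr R X Y, ?_⟩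
  -- compare the `Y → Y` corners of the two sides of `h`
  have hcorner : ContinuousLinearMap.id R Y -
        (snd R X Y ∘L E ∘L inr R Y X) ∘L (snd R Y X ∘L F ∘L inr R X Y) =
      (snd R X Y ∘L E ∘L inl R Y X) ∘L S ∘L (fst R Y X ∘L F ∘L inr R X Y) := by
    ext y
    have hE : ∀ p : Y × X, E p = E (p.1, 0) + E (0, p.2) := fun p ↦ by rw [← map_add]; simp
    have hy := congrArg (fun L ↦ (L (0, y)).2) h
    rw [comp_apply, comp_apply, hE] at hy
    simp only [coe_prodMap', Prod.map_fst, Prod.map_snd, coe_id', id_eq, Prod.snd_add] at hy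
    simp only [sub_apply, comp_apply, coe_id', id_eq, inr_apply, inl_apply, coe_snd', coe_fst']
    exact sub_eq_of_eq_add hy
  rw [hcorner]
  exact (hS.comp_clm _).continuous_comp (map_continuous (snd R X Y ∘L E ∘L inl R Y X))

section Compact

variable {𝕜 E F : Type*} [NontriviallyNormedField 𝕜] [CompleteSpace 𝕜]
  [NormedAddCommGroup E] [NormedSpace 𝕜 E] [CompleteSpace E]
  [NormedAddCommGroup F] [NormedSpace 𝕜 F] [CompleteSpace F]

theorem FiniteDimensional.of_isCompactOperator_of_surjective {f : E →L[𝕜] F}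
    (hf : IsCompactOperator f) (hsurj : Function.Surjective f) : FiniteDimensional 𝕜 F := by
  obtain ⟨V, hV, K, hK, hVK⟩ := (isCompactOperator_iff_exists_mem_nhds_image_subset_compact f).1 hf
  have hfV : f '' V ∈ nhds (0 : F) := by
    simpa using (f.isOpenMap hsurj).image_mem_nhds hV
  exact .of_totallyBounded_nhds_zero 𝕜 (Filter.mem_of_superset hfV hVK) hK.totallyBounded

theorem FiniteDimensional.of_isCompactOperator_of_finite_quotient_range [LocallyCompactSpace 𝕜]
    {f : E →L[𝕜] F}
    (hf : IsCompactOperator f) (h : FiniteDimensional 𝕜 (F ⧸ LinearMap.range (f : E →ₗ[𝕜] F))) :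
    FiniteDimensional 𝕜 F := by
  obtain ⟨W, hW⟩ := Submodule.exists_isCompl (LinearMap.range (f : E →ₗ[𝕜] F))
  have : FiniteDimensional 𝕜 W := (Submodule.quotientEquivOfIsCompl _ W hW).finiteDimensional
  have : ProperSpace W := FiniteDimensional.proper 𝕜 W
  have hcompact : IsCompactOperator (f.coprod W.subtypeL) :=
    (hf.comp_clm (fst 𝕜 E W)).add
      ((isCompactOperator_of_locallyCompactSpace_rng W.subtypeL).comp_clm (snd 𝕜 E W))
  have hsurj : Function.Surjective (f.coprod W.subtypeL) := by
    intro y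
    obtain ⟨_, ⟨x, rfl⟩, w, hw, rfl⟩ :=
      Submodule.mem_sup.1 (hW.sup_eq_top ▸ Submodule.mem_top (x := y))
    exact ⟨(x, ⟨w, hw⟩), rfl⟩
  exact of_isCompactOperator_of_surjective hcompact hsurj

end Compact

theorem no_eae_to_compact_of_essentially_incomparable_general
    (X Y : Type*) [NormedAddCommGroup X] [NormedSpace ℂ X] [CompleteSpace X]
    [NormedAddCommGroup Y] [NormedSpace ℂ Y] [CompleteSpace Y]
    (hY : ¬ FiniteDimensional ℂ Y)
    (hinc : ∀ (A : X →L[ℂ] Y) (B : Y →L[ℂ] X),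
      IsFredholmOp (ContinuousLinearMap.id ℂ X - B ∘L A))
    (T : X →L[ℂ] X) (S : Y →L[ℂ] Y) (hS : IsCompactOperator S) :
    ¬ ∃ (E : (Y × X) ≃L[ℂ] (X × Y)) (F : (X × Y) ≃L[ℂ] (Y × X)),
      T.prodMap (ContinuousLinearMap.id ℂ Y) =
        (E : (Y × X) →L[ℂ] (X × Y)) ∘L
          (S.prodMap (ContinuousLinearMap.id ℂ X)) ∘L
            (F : (X × Y) →L[ℂ] (Y × X)) := by
  rintro ⟨E, F, h⟩
  obtain ⟨A, B, hcompact⟩ := exists_isCompactOperator_id_sub_comp_of_prodMap_id_eq hS h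
  exact hY (.of_isCompactOperator_of_finite_quotient_range hcompact
    (LinearMap.finite_quotient_range_id_sub_comp _ _ (hinc A B).2.2))

/-- If `X` and `Y` are infinite dimensional, essentially incomparable Banach
spaces (every operator `X → Y` is inessential), then no compact operator `S ∈ B(Y)` is
equivalent after extension to any operator `T ∈ B(X)`. -/
theorem no_eae_to_compact_of_essentially_incomparable
    (X Y : Type*) [NormedAddCommGroup X] [NormedSpace ℂ X] [CompleteSpace X]
    [NormedAddCommGroup Y] [NormedSpace ℂ Y] [CompleteSpace Y]
    (hX : ¬ FiniteDimensional ℂ X) (hY : ¬ FiniteDimensional ℂ Y)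
    (hinc : ∀ (A : X →L[ℂ] Y) (B : Y →L[ℂ] X),
      IsFredholmOp (ContinuousLinearMap.id ℂ X - B ∘L A))
    (T : X →L[ℂ] X) (S : Y →L[ℂ] Y) (hS : IsCompactOperator S) :
    ¬ ∃ (E : (Y × X) ≃L[ℂ] (X × Y)) (F : (X × Y) ≃L[ℂ] (Y × X)),
      T.prodMap (ContinuousLinearMap.id ℂ Y) =
        (E : (Y × X) →L[ℂ] (X × Y)) ∘L
          (S.prodMap (ContinuousLinearMap.id ℂ X)) ∘L
            (F : (X × Y) →L[ℂ] (Y × X)) :=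
  no_eae_to_compact_of_essentially_incomparable_general X Y hY hinc T S hS
end

section
/- Let X, Y be Banach spaces and T ∈ B(X), S ∈ B(Y) equivalent after extension, with S compact. Then there exists a closed subspace of Y of finite codimension that is topologically isomorphic to a closed subspace of X. -/
/-!
Comparing the `Y → Y` corners of `T ⊕ 1 = E (S ⊕ 1) F` (restrict to `0 × Y`, project to `Y`)
gives `1 - K = B C` with `K` compact and `B : X → Y`, `C : Y → X` bounded. By Riesz's theory of
compact operators, `ker (1 - K)` is finite dimensional and `1 - K` is bounded below on a closed
complement `Y₁` of it. Hence `C` is bounded below on `Y₁`, so it maps `Y₁` isomorphically onto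
the closed subspace `C Y₁` of `X`.
-/

open ContinuousLinearMap Filter Topology

theorem AntilipschitzWith.of_comp_lipschitzWith {α β γ : Type*} [PseudoEMetricSpace α]
    [PseudoEMetricSpace β] [PseudoEMetricSpace γ] {f : α → β} {g : β → γ} {Kgf Kg : NNReal}
    (hgf : AntilipschitzWith Kgf (g ∘ f)) (hg : LipschitzWith Kg g) :
    AntilipschitzWith (Kgf * Kg) f := fun x y =>
  calc edist x y ≤ Kgf * edist (g (f x)) (g (f y)) := hgf x y
    _ ≤ Kgf * (Kg * edist (f x) (f y)) := by gcongr; exact hg _ _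
    _ = Kgf * Kg * edist (f x) (f y) := (mul_assoc _ _ _).symm

section

variable {𝕜 X Y : Type*} [NontriviallyNormedField 𝕜] [NormedAddCommGroup X] [NormedSpace 𝕜 X]
  [NormedAddCommGroup Y] [NormedSpace 𝕜 Y]

-- With `A, B` the `Y`-rows of `E` and `G, C` the `Y`-columns of `F`, the `Y → Y` corner of
-- `E (S ⊕ 1) F` is `A S G + B C`, while that of `T ⊕ 1` is `1`.
theorem exists_one_sub_eq_comp_of_prodMap_eq {T : X →L[𝕜] X} {S : Y →L[𝕜] Y}
    (hS : IsCompactOperator S) (E : Y × X →L[𝕜] X × Y) (F : X × Y →L[𝕜] Y × X)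
    (h : T.prodMap (.id 𝕜 Y) = E ∘L S.prodMap (.id 𝕜 X) ∘L F) :
    ∃ (K : Y →L[𝕜] Y) (B : X →L[𝕜] Y) (C : Y →L[𝕜] X),
      IsCompactOperator K ∧ 1 - K = B ∘L C := by
  let A := snd 𝕜 X Y ∘L E ∘L inl 𝕜 Y X
  let G := fst 𝕜 Y X ∘L F ∘L inr 𝕜 X Y
  refine ⟨A ∘L S ∘L G, snd 𝕜 X Y ∘L E ∘L inr 𝕜 Y X, snd 𝕜 Y X ∘L F ∘L inr 𝕜 X Y,
    (hS.comp_clm G).clm_comp A, ?_⟩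
  ext y
  have hy := congrArg Prod.snd (DFunLike.congr_fun h (0, y))
  simp only [coe_prodMap', coe_id', Prod.map_apply, map_zero, id_eq, comp_apply] at hy
  rw [sub_apply, one_apply_eq_self, sub_eq_iff_eq_add]
  conv_lhs => rw [hy]
  simp [A, G, ← Prod.snd_add, ← map_add, Prod.map]

theorem exists_isClosed_nonempty_equiv_of_antilipschitzWith
    [CompleteSpace X] [CompleteSpace Y] {f : X →L[𝕜] Y} {c : NNReal}
    (hf : AntilipschitzWith c f) :
    ∃ W : Submodule 𝕜 Y, IsClosed (W : Set Y) ∧ Nonempty (X ≃L[𝕜] W) :=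
  ⟨f.range, hf.isClosed_range f.uniformContinuous,
    ⟨f.equivRange hf.injective (hf.isClosed_range f.uniformContinuous)⟩⟩

theorem IsCompactOperator.finiteDimensional_ker_one_sub_s16 [CompleteSpace 𝕜] {K : Y →L[𝕜] Y}
    (hK : IsCompactOperator K) :
    FiniteDimensional 𝕜 (1 - K : Y →L[𝕜] Y).ker := by
  have hfix : ∀ y ∈ (1 - K : Y →L[𝕜] Y).ker, K y = y := fun y hy =>
    (sub_eq_zero.1 (LinearMap.mem_ker.1 hy)).symm
  have hinv : ∀ y ∈ (1 - K : Y →L[𝕜] Y).ker,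
      (K : Y →ₗ[𝕜] Y) y ∈ (1 - K : Y →L[𝕜] Y).ker :=
    fun y hy => by rwa [coe_coe, hfix y hy]
  have hid : ⇑((K : Y →ₗ[𝕜] Y).restrict hinv) = id :=
    funext fun y => Subtype.ext (hfix y y.2)
  exact .of_isCompactOperator_id (hid ▸ hK.restrict hinv (isClosed_ker _))

end

namespace IsCompactOperator

variable {𝕜 X Y : Type*} [RCLike 𝕜] [NormedAddCommGroup X] [NormedSpace 𝕜 X]
  [NormedAddCommGroup Y] [NormedSpace 𝕜 Y] {K : Y →L[𝕜] Y}

theorem exists_antilipschitzWith_one_sub_comp_subtypeL (hK : IsCompactOperator K)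
    {V : Submodule 𝕜 Y} (hV : IsClosed (V : Set Y))
    (hdisj : Disjoint V (1 - K : Y →L[𝕜] Y).ker) :
    ∃ c, AntilipschitzWith c ((1 - K) ∘L V.subtypeL) := by
  rw [antilipschitzWith_iff_exists_mul_le_norm]
  by_contra! h
  have hunit : ∀ n : ℕ, ∃ u ∈ V, ‖u‖ = 1 ∧ ‖(1 - K) u‖ < 1 / (n + 1) := by
    intro n
    obtain ⟨⟨y, hyV⟩, hy⟩ := h (1 / (n + 1)) (by positivity)
    have hy0 : y ≠ 0 := by rintro rfl; simp at hy
    refine ⟨(‖y‖⁻¹ : 𝕜) • y, V.smul_mem _ hyV, norm_smul_inv_norm hy0, ?_⟩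
    rw [map_smul, norm_smul, norm_inv, RCLike.norm_ofReal, abs_norm,
      inv_mul_lt_iff₀ (norm_pos_iff.2 hy0), mul_comm]
    simpa using hy
  choose u huV hu1 hu using hunit
  have hsmall : Tendsto (fun n => (1 - K) (u n)) atTop (𝓝 0) :=
    squeeze_zero_norm (fun n => (hu n).le) tendsto_one_div_add_atTop_nhds_zero_nat
  obtain ⟨a, -, φ, hφ, hKa⟩ := (hK.isCompact_closure_image_closedBall 1).tendsto_subseq
    (x := fun n => K (u n)) fun n => subset_closure ⟨u n, by simp [hu1], rfl⟩
  -- `u = K u + (1 - K) u`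
  have hconv : Tendsto (u ∘ φ) atTop (𝓝 a) := by
    simpa [Function.comp_def] using hKa.add (hsmall.comp hφ.tendsto_atTop)
  have haV : a ∈ V := hV.mem_of_tendsto hconv (.of_forall fun n => huV _)
  have ha1 : ‖a‖ = 1 := tendsto_nhds_unique hconv.norm (by simp [hu1])
  have haker : a ∈ (1 - K : Y →L[𝕜] Y).ker :=
    tendsto_nhds_unique (((1 - K).continuous.tendsto a).comp hconv)
      (hsmall.comp hφ.tendsto_atTop)
  simp [Submodule.disjoint_def.1 hdisj a haV haker] at ha1

theorem exists_isClosed_finiteDimensional_quotient_antilipschitzWith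
    (hK : IsCompactOperator K) {B : X →L[𝕜] Y} {C : Y →L[𝕜] X} (hBC : 1 - K = B ∘L C) :
    ∃ V : Submodule 𝕜 Y, IsClosed (V : Set Y) ∧ FiniteDimensional 𝕜 (Y ⧸ V) ∧
      ∃ c, AntilipschitzWith c (C ∘L V.subtypeL) := by
  have := hK.finiteDimensional_ker_one_sub_s16
  have hker : (1 - K : Y →L[𝕜] Y).ker.ClosedComplemented := .of_finiteDimensional _
  obtain ⟨V, hV, hcompl⟩ := hker.exists_isClosed_isCompl
  obtain ⟨c, hc⟩ := hK.exists_antilipschitzWith_one_sub_comp_subtypeL hV hcompl.symm.disjoint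
  rw [hBC] at hc
  exact ⟨V, hV, (Submodule.quotientEquivOfIsCompl V _ hcompl.symm).symm.finiteDimensional,
    _, hc.of_comp_lipschitzWith (f := C ∘L V.subtypeL) (g := B) B.lipschitz⟩

end IsCompactOperator

/-- If `T ∈ B(X)` is equivalent after extension to a compact `S ∈ B(Y)`,
then some closed finite codimensional subspace of `Y` is topologically isomorphic to a
closed subspace of `X`. -/
theorem finite_codim_subspace_embeds_of_eae_compact
    (X Y : Type*) [NormedAddCommGroup X] [NormedSpace ℂ X] [CompleteSpace X]
    [NormedAddCommGroup Y] [NormedSpace ℂ Y] [CompleteSpace Y]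
    (T : X →L[ℂ] X) (S : Y →L[ℂ] Y) (hS : IsCompactOperator S)
    (hEAE : ∃ (E : (Y × X) ≃L[ℂ] (X × Y)) (F : (X × Y) ≃L[ℂ] (Y × X)),
      T.prodMap (ContinuousLinearMap.id ℂ Y) =
        (E : (Y × X) →L[ℂ] (X × Y)) ∘L
          (S.prodMap (ContinuousLinearMap.id ℂ X)) ∘L
            (F : (X × Y) →L[ℂ] (Y × X))) :
    ∃ (Y₁ : Submodule ℂ Y), IsClosed (Y₁ : Set Y) ∧ FiniteDimensional ℂ (Y ⧸ Y₁) ∧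
      ∃ (X₁ : Submodule ℂ X), IsClosed (X₁ : Set X) ∧ Nonempty (Y₁ ≃L[ℂ] X₁) := by
  obtain ⟨E, F, hEF⟩ := hEAE
  obtain ⟨K, B, C, hK, hBC⟩ := exists_one_sub_eq_comp_of_prodMap_eq hS _ _ hEF
  obtain ⟨Y₁, hY₁, hcodim, c, hc⟩ :=
    hK.exists_isClosed_finiteDimensional_quotient_antilipschitzWith hBC
  have : CompleteSpace Y₁ := hY₁.completeSpace_coe
  exact ⟨Y₁, hY₁, hcodim, exists_isClosed_nonempty_equiv_of_antilipschitzWith hc⟩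
end

section
/- Let X and Y be Banach spaces with T ∈ B(X) and S ∈ B(Y) equivalent after extension, and suppose S is compact. If X is separable, then Y is separable. -/
open ContinuousLinearMap

/-- The range of a compact operator on a normed space is separable. -/
lemma isSeparable_range_of_compact
    {Y : Type*} [NormedAddCommGroup Y] [NormedSpace ℂ Y]
    (S : Y →L[ℂ] Y) (hS : IsCompactOperator S) :
    TopologicalSpace.IsSeparable (Set.range (S : Y → Y)) := by
  have : Set.range (S : Y → Y) = ⋃ n : ℕ, S '' Metric.closedBall 0 (n + 1) := by
    ext y
    simp only [Set.mem_range, Set.mem_iUnion, Set.mem_image]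
    constructor
    · rintro ⟨x, rfl⟩
      obtain ⟨n, hn⟩ := exists_nat_ge ‖x‖
      exact ⟨n, x, by simpa [Metric.mem_closedBall] using hn.trans (by linarith), rfl⟩
    · rintro ⟨n, x, -, rfl⟩; exact ⟨x, rfl⟩
  rw [this]
  refine TopologicalSpace.IsSeparable.iUnion fun n => ?_
  have hc : IsCompact (closure (S '' Metric.closedBall 0 (n + 1))) :=
    IsCompactOperator.isCompact_closure_image_closedBall (f := (S : Y →ₗ[ℂ] Y)) hS (n + 1)
  exact hc.isSeparable.mono subset_closure

/-- If `T ∈ B(X)` is equivalent after extension to a compact `S ∈ B(Y)`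
and `X` is separable, then `Y` is separable. -/
theorem separable_of_eae_compact
    (X Y : Type*) [NormedAddCommGroup X] [NormedSpace ℂ X] [CompleteSpace X]
    [NormedAddCommGroup Y] [NormedSpace ℂ Y] [CompleteSpace Y]
    (T : X →L[ℂ] X) (S : Y →L[ℂ] Y) (hS : IsCompactOperator S)
    (hEAE : ∃ (E : (Y × X) ≃L[ℂ] (X × Y)) (F : (X × Y) ≃L[ℂ] (Y × X)),
      T.prodMap (ContinuousLinearMap.id ℂ Y) =
        (E : (Y × X) →L[ℂ] (X × Y)) ∘L
          (S.prodMap (ContinuousLinearMap.id ℂ X)) ∘L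
            (F : (X × Y) →L[ℂ] (Y × X)))
    (hX : TopologicalSpace.SeparableSpace X) :
    TopologicalSpace.SeparableSpace Y := by
  obtain ⟨E, F, hEF⟩ := hEAE
  -- The set (range S) ×ˢ univ is separable in Y × X
  have h1 : TopologicalSpace.IsSeparable ((Set.range (S : Y → Y)) ×ˢ (Set.univ : Set X)) :=
    (isSeparable_range_of_compact S hS).prod
      (TopologicalSpace.isSeparable_univ_iff.2 hX)
  -- Its image under Prod.snd ∘ E is separable and contains all of Y
  have h2 : TopologicalSpace.IsSeparable
      ((Prod.snd ∘ (E : (Y × X) → (X × Y))) ''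
        ((Set.range (S : Y → Y)) ×ˢ (Set.univ : Set X))) :=
    h1.image (continuous_snd.comp E.continuous)
  rw [← TopologicalSpace.isSeparable_univ_iff]
  refine h2.mono ?_
  rintro y -
  refine ⟨S.prodMap (ContinuousLinearMap.id ℂ X) (F (0, y)), ⟨⟨_, rfl⟩, trivial⟩, ?_⟩
  have := congrArg (fun (G : (X × Y) →L[ℂ] (X × Y)) => (G (0, y)).2) hEF
  simpa using this.symm
end
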